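/- Mixed-norm Marcinkiewicz interpolation: let T be a sublinear operator from L^{p₀}(ℝ, L^∞(ℝ)) + L^{p₁}(ℝ, L^∞(ℝ)) to measurable functions on ℝ², with 1 ≤ p₀ < p₁ < ∞. Assume ‖‖Tf(x,y)‖_{L^{p₀,∞}_x}‖_{L^∞_y} ≤ A₀ ‖‖f(x,y)‖_{L^∞_y}‖_{L^{p₀}_x} and ‖‖Tf(x,y)‖_{L^{p₁,∞}_x}‖_{L^∞_y} ≤ A₁ ‖‖f(x,y)‖_{L^∞_y}‖_{L^{p₁}_x} for all f. Then for every p₀ < p < p₁, ‖‖Tf(x,y)‖_{L^p_x}‖_{L^∞_y} ≤ (p((2A₀)^{p₀}/(p−p₀) + (2A₁)^{p₁}/(p₁−p)))^{1/p} ‖‖f(x,y)‖_{L^∞_y}‖_{L^p_x}. -/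

import Mathlib

open MeasureTheory
open scoped ENNReal NNReal

/-- The weak-`L^p` quasinorm on `ℝ`: `sup_{t>0} t · |{x : |g x| > t}|^{1/p}`. -/
noncomputable def weakNorm (g : ℝ → ℂ) (p : ℝ) : ℝ≥0∞ :=
  ⨆ t : ℝ≥0, (t : ℝ≥0∞) * volume {x : ℝ | (t : ℝ) < ‖g x‖} ^ (1 / p)

/-!
Write `G x = ‖f(x, ·)‖_{L^∞}` and split `f` at a level `s` into the part over `{G > s}` and the
part over `{G ≤ s}`. Sublinearity and the two weak-type bounds, applied at the level `s = t`,
give for a.e. `y` and every `t > 0`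
`|{x : |Tf(x,y)| > t}| ≤ (2A₀/t)^{p₀} ∫_{G > t} G^{p₀} + (2A₁/t)^{p₁} ∫_{G ≤ t} G^{p₁}`,
and integrating this against `p t^{p-1} dt` (layer cake, then Tonelli) produces the constant.

Neither `f` nor `Tf` is measurable, so `G` is replaced by a measurable minorant `w` with the same
integrals over measurable sets, and the layer-cake formula is applied to a measurable minorant of
`|Tf(·,y)|^p`. The exceptional set of `y` may not depend on the level, so the split is made only
at rational levels; real levels are reached through the right-continuity of
`s ↦ ∫_{w ≤ s} w^{p₁}`.
-/

open Set

section General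

variable {α : Type*} [MeasurableSpace α] {μ : Measure α}

theorem ae_le_of_le_of_lintegral_eq {u v ψ : α → ℝ≥0∞} (hv : Measurable v) (hvu : v ≤ u)
    (heq : ∫⁻ x, u x ∂μ = ∫⁻ x, v x ∂μ) (hfin : ∫⁻ x, v x ∂μ ≠ ∞)
    (hψ : Measurable ψ) (hψu : ψ ≤ u) : ψ ≤ᵐ[μ] v := by
  have hmax : v =ᵐ[μ] fun x => max (ψ x) (v x) :=
    ae_eq_of_ae_le_of_lintegral_le (.of_forall fun x => le_max_right _ _) hfin
      (hψ.max hv).aemeasurable (heq ▸ lintegral_mono fun x => max_le (hψu x) (hvu x))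
  filter_upwards [hmax] with x hx
  exact hx ▸ le_max_left _ _

theorem setLIntegral_rpow_le_of_le_of_lintegral_eq {u v : α → ℝ≥0∞} (hv : Measurable v)
    (hvu : v ≤ u) (heq : ∫⁻ x, u x ∂μ = ∫⁻ x, v x ∂μ) (hfin : ∫⁻ x, v x ∂μ ≠ ∞)
    {θ : ℝ} (hθ : 0 < θ) {E : Set α} (hE : MeasurableSet E) :
    ∫⁻ x in E, u x ^ θ ∂μ ≤ ∫⁻ x in E, v x ^ θ ∂μ := by
  rw [← lintegral_indicator hE, ← lintegral_indicator hE]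
  obtain ⟨φ, hφ, hφu, hφeq⟩ := exists_measurable_le_lintegral_eq μ (E.indicator fun x => u x ^ θ)
  have hroot : (fun x => φ x ^ θ⁻¹) ≤ u := fun x => by
    calc φ x ^ θ⁻¹ ≤ (u x ^ θ) ^ θ⁻¹ :=
          ENNReal.rpow_le_rpow ((hφu x).trans (indicator_le_self _ _ x)) (by positivity)
      _ = u x := ENNReal.rpow_rpow_inv hθ.ne' _
  have hae := ae_le_of_le_of_lintegral_eq hv hvu heq hfin (hφ.pow_const _) hroot
  rw [hφeq]
  refine lintegral_mono_ae ?_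
  filter_upwards [hae] with x hx
  by_cases hxE : x ∈ E
  · rw [indicator_of_mem hxE, ← ENNReal.rpow_inv_rpow hθ.ne' (φ x)]
    exact ENNReal.rpow_le_rpow hx hθ.le
  · simpa [indicator_of_notMem hxE] using hφu x

theorem exists_measurable_le_forall_setLIntegral_rpow_le {G : α → ℝ} (hG : 0 ≤ G) {p : ℝ}
    (hp : 0 < p) (hfin : ∫⁻ x, ENNReal.ofReal (G x ^ p) ∂μ ≠ ∞) :
    ∃ w : α → ℝ, Measurable w ∧ 0 ≤ w ∧ w ≤ G ∧ ∀ q : ℝ, 0 < q → ∀ E, MeasurableSet E →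
      ∫⁻ x in E, ENNReal.ofReal (G x ^ q) ∂μ ≤ ∫⁻ x in E, ENNReal.ofReal (w x ^ q) ∂μ := by
  obtain ⟨v, hv, hvu, heq⟩ := exists_measurable_le_lintegral_eq μ fun x => ENNReal.ofReal (G x ^ p)
  have hv_top : ∀ x, v x ≠ ∞ := fun x => ne_top_of_le_ne_top ENNReal.ofReal_ne_top (hvu x)
  refine ⟨fun x => (v x).toReal ^ p⁻¹, hv.ennreal_toReal.pow_const _,
    fun x => Real.rpow_nonneg ENNReal.toReal_nonneg _,
    fun x => ?_, fun q hq E hE => ?_⟩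
  · calc (v x).toReal ^ p⁻¹ ≤ (G x ^ p) ^ p⁻¹ := by
          gcongr
          exact ENNReal.toReal_le_of_le_ofReal (Real.rpow_nonneg (hG x) _) (hvu x)
      _ = G x := Real.rpow_rpow_inv (hG x) hp.ne'
  · have hexp : ∀ a : ℝ, 0 ≤ a → ENNReal.ofReal (a ^ p) ^ (q / p) = ENNReal.ofReal (a ^ q) :=
      fun a ha => by
        rw [ENNReal.ofReal_rpow_of_nonneg (by positivity) (by positivity), ← Real.rpow_mul ha]
        field_simp
    calc ∫⁻ x in E, ENNReal.ofReal (G x ^ q) ∂μ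
        = ∫⁻ x in E, ENNReal.ofReal (G x ^ p) ^ (q / p) ∂μ := by simp_rw [hexp _ (hG _)]
      _ ≤ ∫⁻ x in E, v x ^ (q / p) ∂μ :=
          setLIntegral_rpow_le_of_le_of_lintegral_eq hv hvu heq (heq ▸ hfin) (by positivity) hE
      _ = ∫⁻ x in E, ENNReal.ofReal (((v x).toReal ^ p⁻¹) ^ q) ∂μ := by
          refine setLIntegral_congr_fun hE fun x _ => ?_
          rw [← hexp _ (by positivity), ← Real.rpow_mul ENNReal.toReal_nonneg,
            inv_mul_cancel₀ hp.ne', Real.rpow_one, ENNReal.ofReal_toReal (hv_top x)]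

theorem lintegral_enorm_rpow_le_lintegral_meas_lt_mul {E : Type*} [SeminormedAddGroup E]
    (g : α → E) {p : ℝ} (hp : 0 < p) :
    ∫⁻ x, ‖g x‖ₑ ^ p ∂μ ≤
      ENNReal.ofReal p * ∫⁻ t in Ioi 0, μ {x | t < ‖g x‖} * ENNReal.ofReal (t ^ (p - 1)) := by
  obtain ⟨v, hv, hvg, heq⟩ := exists_measurable_le_lintegral_eq μ fun x => ‖g x‖ₑ ^ p
  set V : α → ℝ := fun x => (v x).toReal ^ p⁻¹
  have hV : ∀ x, ENNReal.ofReal (V x ^ p) = v x := fun x => by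
    have hv_top : v x ≠ ∞ := ne_top_of_le_ne_top (by simp [hp.le]) (hvg x)
    rw [← Real.rpow_mul ENNReal.toReal_nonneg, inv_mul_cancel₀ hp.ne', Real.rpow_one,
      ENNReal.ofReal_toReal hv_top]
  have hVg : ∀ x, V x ≤ ‖g x‖ := fun x => by
    calc V x ≤ (‖g x‖ ^ p) ^ p⁻¹ := by
          refine Real.rpow_le_rpow ENNReal.toReal_nonneg ?_ (by positivity)
          have : v x ≤ ‖g x‖ₑ ^ p := hvg x
          rw [← ofReal_norm, ENNReal.ofReal_rpow_of_nonneg (norm_nonneg _) hp.le] at this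
          exact ENNReal.toReal_le_of_le_ofReal (by positivity) this
      _ = ‖g x‖ := Real.rpow_rpow_inv (norm_nonneg _) hp.ne'
  calc ∫⁻ x, ‖g x‖ₑ ^ p ∂μ = ∫⁻ x, ENNReal.ofReal (V x ^ p) ∂μ := by simp_rw [heq, hV]
    _ = ENNReal.ofReal p * ∫⁻ t in Ioi 0, μ {x | t < V x} * ENNReal.ofReal (t ^ (p - 1)) :=
        lintegral_rpow_eq_lintegral_meas_lt_mul μ (.of_forall fun x => by positivity)
          (hv.ennreal_toReal.pow_const _).aemeasurable hp
    _ ≤ _ := by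
        gcongr with t x
        exact hVg x

theorem iInf_rat_gt_setLIntegral_setOf_le {w : α → ℝ} (hw : Measurable w) (F : α → ℝ≥0∞) {t : ℝ}
    (hfin : ∃ s : ℚ, t < s ∧ ∫⁻ x in {x | w x ≤ s}, F x ∂μ ≠ ∞) :
    ⨅ s : {s : ℚ // t < s}, ∫⁻ x in {x | w x ≤ (s : ℚ)}, F x ∂μ =
      ∫⁻ x in {x | w x ≤ t}, F x ∂μ := by
  have hmeas : ∀ r : ℝ, MeasurableSet {x | w x ≤ r} := fun r => measurableSet_le hw measurable_const
  have hinter : ⋂ s : {s : ℚ // t < s}, {x | w x ≤ (s : ℚ)} = {x | w x ≤ t} := by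
    ext x
    simp only [mem_iInter, mem_ofPred_eq, Subtype.forall]
    exact ⟨fun h => le_of_forall_lt_rat_imp_le h, fun h s hs => h.trans hs.le⟩
  obtain ⟨s₀, hs₀, hs₀fin⟩ := hfin
  simp_rw [← withDensity_apply _ (hmeas _), ← hinter]
  refine (Monotone.measure_iInter (μ := μ.withDensity F)
    (s := fun s : {s : ℚ // t < s} => {x | w x ≤ (s : ℚ)}) (fun s r hsr x (hx : w x ≤ _) => ?_)
    (fun s => (hmeas _).nullMeasurableSet) ⟨(⟨s₀, hs₀⟩ : {s : ℚ // t < s}), ?_⟩).symm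
  · exact hx.trans (by exact_mod_cast hsr)
  · rwa [withDensity_apply _ (hmeas _)]

theorem setLIntegral_setOf_le_rpow_le {w : α → ℝ} (hw : Measurable w) (hw0 : 0 ≤ w)
    {p q s : ℝ} (hpq : p ≤ q) (hq : 0 < q) (hs : 0 ≤ s) :
    ∫⁻ x in {x | w x ≤ s}, ENNReal.ofReal (w x ^ q) ∂μ ≤
      ENNReal.ofReal (s ^ (q - p)) * ∫⁻ x, ENNReal.ofReal (w x ^ p) ∂μ := by
  rw [← lintegral_const_mul' _ _ ENNReal.ofReal_ne_top]
  refine (setLIntegral_mono' (measurableSet_le hw measurable_const)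
    fun x (hx : w x ≤ s) => ?_).trans (setLIntegral_le_lintegral _ _)
  have hx0 : 0 ≤ w x := hw0 x
  rw [← ENNReal.ofReal_mul (by positivity)]
  refine ENNReal.ofReal_le_ofReal ?_
  calc w x ^ q = w x ^ (q - p) * w x ^ p := by
        rw [← Real.rpow_add' (hw0 x) (by simpa using hq.ne'), sub_add_cancel]
    _ ≤ s ^ (q - p) * w x ^ p := by
        gcongr

theorem eLpNorm_ofReal_eq_lintegral_ofReal_rpow {G : α → ℝ} (hG : 0 ≤ G) {q : ℝ} (hq : 0 < q) :
    eLpNorm G (ENNReal.ofReal q) μ = (∫⁻ x, ENNReal.ofReal (G x ^ q) ∂μ) ^ (1 / q) := by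
  rw [eLpNorm_eq_lintegral_rpow_enorm_toReal (by simpa using hq) ENNReal.ofReal_ne_top,
    ENNReal.toReal_ofReal hq.le]
  simp_rw [Real.enorm_eq_ofReal (hG _), ENNReal.ofReal_rpow_of_nonneg (hG _) hq.le]


theorem eLpNorm_le_ofReal_rpow_mul_of_lintegral_le {E : Type*} [SeminormedAddGroup E]
    {g : α → E} {G : α → ℝ} (hG : 0 ≤ G) {p K : ℝ} (hp : 0 < p) (hK : 0 ≤ K)
    (h : ∫⁻ x, ‖g x‖ₑ ^ p ∂μ ≤ ENNReal.ofReal K * ∫⁻ x, ENNReal.ofReal (G x ^ p) ∂μ) :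
    eLpNorm g (ENNReal.ofReal p) μ ≤
      ENNReal.ofReal (K ^ (1 / p)) * eLpNorm G (ENNReal.ofReal p) μ := by
  rw [eLpNorm_eq_lintegral_rpow_enorm_toReal (by simpa using hp) ENNReal.ofReal_ne_top,
    ENNReal.toReal_ofReal hp.le, eLpNorm_ofReal_eq_lintegral_ofReal_rpow hG hp,
    ← ENNReal.ofReal_rpow_of_nonneg hK (by positivity),
    ← ENNReal.mul_rpow_of_nonneg _ _ (by positivity)]
  gcongr

end General

theorem lintegral_Ioo_zero_rpow_sub_one {a c : ℝ} (hc : 0 < c) (ha : 0 ≤ a) :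
    ∫⁻ t in Ioo 0 a, ENNReal.ofReal (t ^ (c - 1)) = ENNReal.ofReal (a ^ c / c) := by
  have hint : IntegrableOn (fun t : ℝ => t ^ (c - 1)) (Ioc 0 a) := by
    simpa [intervalIntegrable_iff, uIoc_of_le ha] using
      intervalIntegral.intervalIntegrable_rpow' (a := 0) (b := a) (r := c - 1) (by linarith)
  rw [← ofReal_integral_eq_lintegral_ofReal (hint.mono_set Ioo_subset_Ioc_self)
    (ae_restrict_of_forall_mem measurableSet_Ioo fun t ht => by have := ht.1; positivity),
    ← integral_Ioc_eq_integral_Ioo, ← intervalIntegral.integral_of_le ha,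
    integral_rpow (Or.inl (by linarith)), sub_add_cancel, Real.zero_rpow hc.ne', sub_zero]

theorem lintegral_Ici_rpow_sub_one {a c : ℝ} (hc : c < 0) (ha : 0 < a) :
    ∫⁻ t in Ici a, ENNReal.ofReal (t ^ (c - 1)) = ENNReal.ofReal (a ^ c / -c) := by
  rw [← Measure.restrict_congr_set Ioi_ae_eq_Ici, ← ofReal_integral_eq_lintegral_ofReal
    (integrableOn_Ioi_rpow_of_lt (by linarith) ha)
    (ae_restrict_of_forall_mem measurableSet_Ioi fun t ht => by
      have : 0 < t := ha.trans ht
      positivity),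
    integral_Ioi_rpow_of_lt (by linarith) ha, sub_add_cancel, neg_div, div_neg]

section Tonelli

variable {α : Type*} [MeasurableSpace α] {μ : Measure α} [SFinite μ]

theorem lintegral_mul_setLIntegral_comm {β : Type*} [MeasurableSpace β] {ν : Measure β}
    [SFinite ν] {f : β → ℝ≥0∞} {g : α → ℝ≥0∞} (hf : Measurable f) (hg : Measurable g)
    {S : Set (β × α)} (hS : MeasurableSet S) :
    ∫⁻ t, f t * ∫⁻ x in {x | (t, x) ∈ S}, g x ∂μ ∂ν =
      ∫⁻ x, g x * ∫⁻ t in {t | (t, x) ∈ S}, f t ∂ν ∂μ := by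
  have hF : Measurable (S.indicator fun z => f z.1 * g z.2) :=
    ((hf.comp measurable_fst).mul (hg.comp measurable_snd)).indicator hS
  calc _ = ∫⁻ t, ∫⁻ x, S.indicator (fun z => f z.1 * g z.2) (t, x) ∂μ ∂ν := by
        refine lintegral_congr fun t => ?_
        rw [← lintegral_const_mul _ hg,
          ← lintegral_indicator (s := {x | (t, x) ∈ S}) (measurable_prodMk_left hS)]
        rfl
    _ = ∫⁻ x, ∫⁻ t, S.indicator (fun z => f z.1 * g z.2) (t, x) ∂ν ∂μ :=
        lintegral_lintegral_swap hF.aemeasurable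
    _ = _ := by
        refine lintegral_congr fun x => ?_
        rw [← lintegral_const_mul _ hf,
          ← lintegral_indicator (s := {t | (t, x) ∈ S}) (measurable_prodMk_right hS)]
        simp_rw [mul_comm (g x)]
        rfl

theorem lintegral_Ioi_rpow_mul_setLIntegral_lt {w : α → ℝ} (hw : Measurable w) (hw0 : 0 ≤ w)
    {q c : ℝ} (hc : 0 < c) (hqc : 0 < q + c) :
    ∫⁻ t in Ioi 0, ENNReal.ofReal (t ^ (c - 1)) *
        ∫⁻ x in {x | t < w x}, ENNReal.ofReal (w x ^ q) ∂μ =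
      ENNReal.ofReal c⁻¹ * ∫⁻ x, ENNReal.ofReal (w x ^ (q + c)) ∂μ := by
  refine (lintegral_mul_setLIntegral_comm (S := {z : ℝ × α | z.1 < w z.2})
    (f := fun t => ENNReal.ofReal (t ^ (c - 1))) (measurable_id.pow_const _).ennreal_ofReal
    (hw.pow_const _).ennreal_ofReal
    (measurableSet_lt measurable_fst (hw.comp measurable_snd))).trans ?_
  rw [← lintegral_const_mul' _ _ ENNReal.ofReal_ne_top]
  refine lintegral_congr fun x => ?_
  have hx : 0 ≤ w x := hw0 x
  rw [show {t | (t, x) ∈ {z : ℝ × α | z.1 < w z.2}} = Iio (w x) from rfl,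
    Measure.restrict_restrict measurableSet_Iio, Iio_inter_Ioi,
    lintegral_Ioo_zero_rpow_sub_one hc hx, ← ENNReal.ofReal_mul (by positivity),
    ← ENNReal.ofReal_mul (by positivity), Real.rpow_add' hx hqc.ne']
  ring_nf

theorem lintegral_Ioi_rpow_mul_setLIntegral_le {w : α → ℝ} (hw : Measurable w) (hw0 : 0 ≤ w)
    {q c : ℝ} (hc : c < 0) (hqc : 0 < q + c) :
    ∫⁻ t in Ioi 0, ENNReal.ofReal (t ^ (c - 1)) *
        ∫⁻ x in {x | w x ≤ t}, ENNReal.ofReal (w x ^ q) ∂μ =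
      ENNReal.ofReal (-c)⁻¹ * ∫⁻ x, ENNReal.ofReal (w x ^ (q + c)) ∂μ := by
  refine (lintegral_mul_setLIntegral_comm (S := {z : ℝ × α | w z.2 ≤ z.1})
    (f := fun t => ENNReal.ofReal (t ^ (c - 1))) (measurable_id.pow_const _).ennreal_ofReal
    (hw.pow_const _).ennreal_ofReal
    (measurableSet_le (hw.comp measurable_snd) measurable_fst)).trans ?_
  rw [← lintegral_const_mul' _ _ ENNReal.ofReal_ne_top]
  refine lintegral_congr fun x => ?_
  rcases (show 0 ≤ w x from hw0 x).eq_or_lt with hx | hx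
  · simp [← hx, Real.zero_rpow (by linarith : q ≠ 0), Real.zero_rpow hqc.ne']
  rw [show {t | (t, x) ∈ {z : ℝ × α | w z.2 ≤ z.1}} = Ici (w x) from rfl,
    Measure.restrict_restrict measurableSet_Ici,
    inter_eq_left.mpr (Ici_subset_Ioi.mpr hx),
    lintegral_Ici_rpow_sub_one hc hx, ← ENNReal.ofReal_mul (by positivity),
    ← ENNReal.ofReal_mul (inv_nonneg.mpr (neg_nonneg.mpr hc.le)), Real.rpow_add hx]
  ring_nf

end Tonelli

theorem volume_lt_norm_le_of_weakNorm_le {g : ℝ → ℂ} {q A : ℝ} (hq : 0 < q) (hA : 0 ≤ A)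
    {Φ : ℝ≥0∞} (h : weakNorm g q ≤ ENNReal.ofReal A * Φ ^ (1 / q)) {s : ℝ} (hs : 0 < s) :
    volume {x | s < ‖g x‖} ≤ ENNReal.ofReal ((A / s) ^ q) * Φ := by
  have hlevel : ENNReal.ofReal s * volume {x | s < ‖g x‖} ^ (1 / q) ≤
      ENNReal.ofReal A * Φ ^ (1 / q) := by
    refine le_trans ?_ ((le_iSup _ s.toNNReal).trans h)
    rw [Real.coe_toNNReal _ hs.le]
    rfl
  have hpow : ENNReal.ofReal s ^ q * volume {x | s < ‖g x‖} ≤ ENNReal.ofReal A ^ q * Φ := by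
    have := ENNReal.rpow_le_rpow hlevel hq.le
    rwa [ENNReal.mul_rpow_of_nonneg _ _ hq.le, ENNReal.mul_rpow_of_nonneg _ _ hq.le, one_div,
      ENNReal.rpow_inv_rpow hq.ne', ENNReal.rpow_inv_rpow hq.ne'] at this
  rw [Real.div_rpow hA hs.le, ENNReal.ofReal_div_of_pos (by positivity),
    ← ENNReal.ofReal_rpow_of_nonneg hA hq.le, ← ENNReal.ofReal_rpow_of_nonneg hs.le hq.le,
    ← ENNReal.mul_div_right_comm, ENNReal.le_div_iff_mul_le (.inl (by simp [hs]))
      (.inl (by simp [hq.le])), mul_comm]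
  exact hpow

section Slice

variable {w : ℝ → ℝ} {p₀ p p₁ A₀ A₁ : ℝ} {g : ℝ → ℂ} {g₀ g₁ : ℚ → ℝ → ℂ}

theorem volume_lt_norm_le_of_weakNorm_split (hw : Measurable w) (hp₀ : 0 < p₀) (hp₁ : 0 < p₁)
    (hA₀ : 0 ≤ A₀) (hA₁ : 0 ≤ A₁)
    (hfin : ∀ s : ℝ, 0 ≤ s → ∫⁻ x in {x | w x ≤ s}, ENNReal.ofReal (w x ^ p₁) ≠ ∞)
    (hsplit : ∀ s x, ‖g x‖ ≤ ‖g₀ s x‖ + ‖g₁ s x‖)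
    (h₀ : ∀ s : ℚ, weakNorm (g₀ s) p₀ ≤
      ENNReal.ofReal A₀ * (∫⁻ x in {x | s < w x}, ENNReal.ofReal (w x ^ p₀)) ^ (1 / p₀))
    (h₁ : ∀ s : ℚ, weakNorm (g₁ s) p₁ ≤
      ENNReal.ofReal A₁ * (∫⁻ x in {x | w x ≤ s}, ENNReal.ofReal (w x ^ p₁)) ^ (1 / p₁))
    {t : ℝ} (ht : 0 < t) :
    volume {x | t < ‖g x‖} ≤
      ENNReal.ofReal ((2 * A₀ / t) ^ p₀) * (∫⁻ x in {x | t < w x}, ENNReal.ofReal (w x ^ p₀)) +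
      ENNReal.ofReal ((2 * A₁ / t) ^ p₁) * ∫⁻ x in {x | w x ≤ t}, ENNReal.ofReal (w x ^ p₁) := by
  have hhalf : ∀ A : ℝ, A / (t / 2) = 2 * A / t := fun A => by field_simp
  have hlevel : ∀ s : ℚ, volume {x | t < ‖g x‖} ≤
      ENNReal.ofReal ((2 * A₀ / t) ^ p₀) * (∫⁻ x in {x | s < w x}, ENNReal.ofReal (w x ^ p₀)) +
      ENNReal.ofReal ((2 * A₁ / t) ^ p₁) * ∫⁻ x in {x | w x ≤ s}, ENNReal.ofReal (w x ^ p₁) :=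
    fun s => calc
      _ ≤ volume ({x | t / 2 < ‖g₀ s x‖} ∪ {x | t / 2 < ‖g₁ s x‖}) := by
          refine measure_mono fun x (hx : t < ‖g x‖) => ?_
          by_contra hnot
          simp only [mem_union, mem_ofPred_eq, not_or, not_lt] at hnot
          linarith [hsplit s x]
      _ ≤ _ := (measure_union_le _ _).trans (add_le_add
          (hhalf A₀ ▸ volume_lt_norm_le_of_weakNorm_le hp₀ hA₀ (h₀ s) (half_pos ht))
          (hhalf A₁ ▸ volume_lt_norm_le_of_weakNorm_le hp₁ hA₁ (h₁ s) (half_pos ht)))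
  obtain ⟨s₀, hs₀⟩ := exists_rat_gt t
  have : Nonempty {s : ℚ // t < s} := ⟨⟨s₀, hs₀⟩⟩
  calc volume {x | t < ‖g x‖}
      ≤ ⨅ s : {s : ℚ // t < s},
          ENNReal.ofReal ((2 * A₀ / t) ^ p₀) * (∫⁻ x in {x | t < w x}, ENNReal.ofReal (w x ^ p₀)) +
          ENNReal.ofReal ((2 * A₁ / t) ^ p₁) *
            ∫⁻ x in {x | w x ≤ (s : ℚ)}, ENNReal.ofReal (w x ^ p₁) := by
        refine le_iInf fun s => (hlevel s).trans ?_
        gcongr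
        exact s.2.le
    _ = _ := by
        rw [← ENNReal.add_iInf, ← ENNReal.mul_iInf (by simp),
          iInf_rat_gt_setLIntegral_setOf_le hw _ ⟨s₀, hs₀, hfin _ (ht.trans hs₀).le⟩]

theorem lintegral_Ioi_weakType_bound_mul_rpow (hw : Measurable w) (hw0 : 0 ≤ w)
    (hp₀ : 0 < p₀) (hp₀p : p₀ < p) (hpp₁ : p < p₁) (hA₀ : 0 ≤ A₀) (hA₁ : 0 ≤ A₁) :
    ∫⁻ t in Ioi 0, (ENNReal.ofReal ((2 * A₀ / t) ^ p₀) *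
        (∫⁻ x in {x | t < w x}, ENNReal.ofReal (w x ^ p₀)) +
      ENNReal.ofReal ((2 * A₁ / t) ^ p₁) * ∫⁻ x in {x | w x ≤ t}, ENNReal.ofReal (w x ^ p₁)) *
        ENNReal.ofReal (t ^ (p - 1)) =
      ENNReal.ofReal ((2 * A₀) ^ p₀ / (p - p₀) + (2 * A₁) ^ p₁ / (p₁ - p)) *
        ∫⁻ x, ENNReal.ofReal (w x ^ p) := by
  have hscale : ∀ {A q t : ℝ}, 0 ≤ A → 0 < t →
      ENNReal.ofReal ((2 * A / t) ^ q) * ENNReal.ofReal (t ^ (p - 1)) =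
        ENNReal.ofReal ((2 * A) ^ q) * ENNReal.ofReal (t ^ (p - q - 1)) := fun hA ht => by
    rw [← ENNReal.ofReal_mul (by positivity), ← ENNReal.ofReal_mul (by positivity),
      Real.div_rpow (by positivity) ht.le, div_mul_eq_mul_div, mul_div_assoc, ← Real.rpow_sub ht]
    ring_nf
  have hlow := lintegral_Ioi_rpow_mul_setLIntegral_lt (μ := volume) hw hw0 (q := p₀)
    (c := p - p₀) (by linarith) (by linarith)
  have hhigh := lintegral_Ioi_rpow_mul_setLIntegral_le (μ := volume) hw hw0 (q := p₁)
    (c := p - p₁) (by linarith) (by linarith)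
  rw [add_sub_cancel] at hlow hhigh
  rw [neg_sub] at hhigh
  have hmeas : Measurable fun t => ∫⁻ x in {x | t < w x}, ENNReal.ofReal (w x ^ p₀) :=
    Antitone.measurable fun s t hst => lintegral_mono_set fun x (hx : t < w x) => hst.trans_lt hx
  calc _ = ∫⁻ t in Ioi 0, (ENNReal.ofReal ((2 * A₀) ^ p₀) * (ENNReal.ofReal (t ^ (p - p₀ - 1)) *
          ∫⁻ x in {x | t < w x}, ENNReal.ofReal (w x ^ p₀)) +
        ENNReal.ofReal ((2 * A₁) ^ p₁) * (ENNReal.ofReal (t ^ (p - p₁ - 1)) *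
          ∫⁻ x in {x | w x ≤ t}, ENNReal.ofReal (w x ^ p₁))) := by
        refine setLIntegral_congr_fun measurableSet_Ioi fun t (ht : 0 < t) => ?_
        rw [add_mul, mul_right_comm, hscale hA₀ ht,
          mul_right_comm _ (∫⁻ x in {x | w x ≤ t}, _), hscale hA₁ ht, mul_assoc, mul_assoc]
    _ = ENNReal.ofReal ((2 * A₀) ^ p₀) * (ENNReal.ofReal (p - p₀)⁻¹ *
          ∫⁻ x, ENNReal.ofReal (w x ^ p)) + ENNReal.ofReal ((2 * A₁) ^ p₁) *
          (ENNReal.ofReal (p₁ - p)⁻¹ * ∫⁻ x, ENNReal.ofReal (w x ^ p)) := by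
        rw [lintegral_add_left, lintegral_const_mul' _ _ ENNReal.ofReal_ne_top,
          lintegral_const_mul' _ _ ENNReal.ofReal_ne_top, hlow, hhigh]
        exact ((measurable_id.pow_const _).ennreal_ofReal.mul hmeas).const_mul _
    _ = _ := by
        have hA₀' : 0 ≤ (2 * A₀) ^ p₀ := by positivity
        have hA₁' : 0 ≤ (2 * A₁) ^ p₁ := by positivity
        rw [ENNReal.ofReal_add (by positivity) (by positivity), div_eq_mul_inv, div_eq_mul_inv,
          ENNReal.ofReal_mul hA₀', ENNReal.ofReal_mul hA₁']
        ring

theorem lintegral_enorm_rpow_le_of_weakNorm_split (hw : Measurable w) (hw0 : 0 ≤ w)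
    (hp₀ : 0 < p₀) (hp₀p : p₀ < p) (hpp₁ : p < p₁) (hA₀ : 0 ≤ A₀) (hA₁ : 0 ≤ A₁)
    (hfin : ∫⁻ x, ENNReal.ofReal (w x ^ p) ≠ ∞)
    (hsplit : ∀ s x, ‖g x‖ ≤ ‖g₀ s x‖ + ‖g₁ s x‖)
    (h₀ : ∀ s : ℚ, weakNorm (g₀ s) p₀ ≤
      ENNReal.ofReal A₀ * (∫⁻ x in {x | s < w x}, ENNReal.ofReal (w x ^ p₀)) ^ (1 / p₀))
    (h₁ : ∀ s : ℚ, weakNorm (g₁ s) p₁ ≤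
      ENNReal.ofReal A₁ * (∫⁻ x in {x | w x ≤ s}, ENNReal.ofReal (w x ^ p₁)) ^ (1 / p₁)) :
    ∫⁻ x, ‖g x‖ₑ ^ p ≤
      ENNReal.ofReal (p * ((2 * A₀) ^ p₀ / (p - p₀) + (2 * A₁) ^ p₁ / (p₁ - p))) *
        ∫⁻ x, ENNReal.ofReal (w x ^ p) := by
  have hp : 0 < p := hp₀.trans hp₀p
  have hfin₁ : ∀ s : ℝ, 0 ≤ s → ∫⁻ x in {x | w x ≤ s}, ENNReal.ofReal (w x ^ p₁) ≠ ∞ :=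
    fun s hs => ne_top_of_le_ne_top (ENNReal.mul_ne_top ENNReal.ofReal_ne_top hfin)
      (setLIntegral_setOf_le_rpow_le hw hw0 hpp₁.le (hp.trans hpp₁) hs)
  calc ∫⁻ x, ‖g x‖ₑ ^ p
      ≤ ENNReal.ofReal p *
          ∫⁻ t in Ioi 0, volume {x | t < ‖g x‖} * ENNReal.ofReal (t ^ (p - 1)) :=
        lintegral_enorm_rpow_le_lintegral_meas_lt_mul g hp
    _ ≤ ENNReal.ofReal p * ∫⁻ t in Ioi 0, (ENNReal.ofReal ((2 * A₀ / t) ^ p₀) *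
          (∫⁻ x in {x | t < w x}, ENNReal.ofReal (w x ^ p₀)) +
        ENNReal.ofReal ((2 * A₁ / t) ^ p₁) * ∫⁻ x in {x | w x ≤ t}, ENNReal.ofReal (w x ^ p₁)) *
          ENNReal.ofReal (t ^ (p - 1)) := by
        gcongr ENNReal.ofReal p * ?_
        refine setLIntegral_mono' measurableSet_Ioi fun t (ht : 0 < t) => ?_
        gcongr
        exact volume_lt_norm_le_of_weakNorm_split hw hp₀ (hp.trans hpp₁) hA₀ hA₁ hfin₁
          hsplit h₀ h₁ ht
    _ = _ := by
        rw [lintegral_Ioi_weakType_bound_mul_rpow hw hw0 hp₀ hp₀p hpp₁ hA₀ hA₁, ← mul_assoc,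
          ← ENNReal.ofReal_mul hp.le]

end Slice

noncomputable def essSupSnd (f : ℝ → ℝ → ℂ) (x : ℝ) : ℝ :=
  (essSup (fun y : ℝ => (‖f x y‖₊ : ℝ≥0∞)) volume).toReal

theorem essSupSnd_nonneg (f : ℝ → ℝ → ℂ) : 0 ≤ essSupSnd f := fun _ => ENNReal.toReal_nonneg

theorem essSupSnd_indicator (f : ℝ → ℝ → ℂ) (E : Set ℝ) :
    essSupSnd (E.indicator f) = E.indicator (essSupSnd f) := by
  ext x
  by_cases hx : x ∈ E
  · simp [essSupSnd, hx]
  · simp only [essSupSnd, indicator_of_notMem hx, Pi.zero_apply, nnnorm_zero, ENNReal.coe_zero]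
    rw [← ENNReal.bot_eq_zero, essSup_const_bot, ENNReal.bot_eq_zero, ENNReal.toReal_zero]

theorem norm_le_norm_indicator_lt_add_norm_indicator_le {T : (ℝ → ℝ → ℂ) → (ℝ → ℝ → ℂ)}
    (hsub : ∀ f g : ℝ → ℝ → ℂ, ∀ x y : ℝ, ‖T (f + g) x y‖ ≤ ‖T f x y‖ + ‖T g x y‖)
    (f : ℝ → ℝ → ℂ) (w : ℝ → ℝ) (s x y : ℝ) :
    ‖T f x y‖ ≤ ‖T ({x | s < w x}.indicator f) x y‖ + ‖T ({x | w x ≤ s}.indicator f) x y‖ := by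
  have := hsub ({x | s < w x}.indicator f) ({x | s < w x}ᶜ.indicator f) x y
  rw [indicator_self_add_compl] at this
  simpa only [compl_ofPred, not_lt] using this

theorem ae_forall_weakNorm_indicator_le {T : (ℝ → ℝ → ℂ) → (ℝ → ℝ → ℂ)} {q A : ℝ} (hq : 0 < q)
    (hT : ∀ f : ℝ → ℝ → ℂ, essSup (fun y : ℝ => weakNorm (fun x => T f x y) q) volume ≤
      ENNReal.ofReal A * eLpNorm (essSupSnd f) (ENNReal.ofReal q) volume)
    {f : ℝ → ℝ → ℂ} {w : ℝ → ℝ} (hw : ∀ E, MeasurableSet E →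
      ∫⁻ x in E, ENNReal.ofReal (essSupSnd f x ^ q) ≤ ∫⁻ x in E, ENNReal.ofReal (w x ^ q))
    {ι : Type*} [Countable ι] {E : ι → Set ℝ} (hE : ∀ i, MeasurableSet (E i)) :
    ∀ᵐ y, ∀ i, weakNorm (fun x => T ((E i).indicator f) x y) q ≤
      ENNReal.ofReal A * (∫⁻ x in E i, ENNReal.ofReal (w x ^ q)) ^ (1 / q) := by
  refine ae_all_iff.mpr fun i => ?_
  filter_upwards [ENNReal.ae_le_essSup fun y => weakNorm (fun x => T ((E i).indicator f) x y) q]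
    with y hy
  refine hy.trans ((hT _).trans ?_)
  rw [essSupSnd_indicator, eLpNorm_indicator_eq_eLpNorm_restrict (hE i),
    eLpNorm_ofReal_eq_lintegral_ofReal_rpow (essSupSnd_nonneg f) hq]
  gcongr ENNReal.ofReal A * ?_ ^ _
  exact hw _ (hE i)

theorem mixed_norm_interpolation_general
    (T : (ℝ → ℝ → ℂ) → (ℝ → ℝ → ℂ))
    (hsub : ∀ f g : ℝ → ℝ → ℂ, ∀ x y : ℝ,
      ‖T (f + g) x y‖ ≤ ‖T f x y‖ + ‖T g x y‖)
    (p₀ p₁ : ℝ) (hp₀ : 1 ≤ p₀)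
    (A₀ A₁ : ℝ) (hA₀ : 0 < A₀) (hA₁ : 0 < A₁)
    (h₀ : ∀ f : ℝ → ℝ → ℂ,
      essSup (fun y : ℝ => weakNorm (fun x => T f x y) p₀) volume ≤
        ENNReal.ofReal A₀ *
          eLpNorm (fun x : ℝ =>
            (essSup (fun y : ℝ => (‖f x y‖₊ : ℝ≥0∞)) volume).toReal)
            (ENNReal.ofReal p₀) volume)
    (h₁ : ∀ f : ℝ → ℝ → ℂ,
      essSup (fun y : ℝ => weakNorm (fun x => T f x y) p₁) volume ≤
        ENNReal.ofReal A₁ *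
          eLpNorm (fun x : ℝ =>
            (essSup (fun y : ℝ => (‖f x y‖₊ : ℝ≥0∞)) volume).toReal)
            (ENNReal.ofReal p₁) volume) :
    ∀ p : ℝ, p₀ < p → p < p₁ → ∀ f : ℝ → ℝ → ℂ,
      essSup (fun y : ℝ => eLpNorm (fun x => T f x y) (ENNReal.ofReal p) volume) volume ≤
        ENNReal.ofReal
            ((p * ((2 * A₀) ^ p₀ / (p - p₀) + (2 * A₁) ^ p₁ / (p₁ - p))) ^ (1 / p)) *
          eLpNorm (fun x : ℝ =>
            (essSup (fun y : ℝ => (‖f x y‖₊ : ℝ≥0∞)) volume).toReal)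
            (ENNReal.ofReal p) volume := by
  intro p hp₀p hpp₁ f
  have hp₀' : 0 < p₀ := by linarith
  have hp : 0 < p := by linarith
  have hp₁' : 0 < p₁ := by linarith
  have hK : 0 < p * ((2 * A₀) ^ p₀ / (p - p₀) + (2 * A₁) ^ p₁ / (p₁ - p)) := by
    have := sub_pos.mpr hp₀p
    have := sub_pos.mpr hpp₁
    positivity
  change _ ≤ _ * eLpNorm (essSupSnd f) _ _
  refine essSup_le_of_ae_le _ ?_
  by_cases hI : ∫⁻ x, ENNReal.ofReal (essSupSnd f x ^ p) = ∞
  · filter_upwards with y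
    rw [eLpNorm_ofReal_eq_lintegral_ofReal_rpow (essSupSnd_nonneg f) hp, hI,
      ENNReal.top_rpow_of_pos (by positivity), ENNReal.mul_top (by simp; positivity)]
    exact le_top
  obtain ⟨w, hw, hw0, hwG, hGw⟩ :=
    exists_measurable_le_forall_setLIntegral_rpow_le (essSupSnd_nonneg f) hp hI
  have hwp : ∫⁻ x, ENNReal.ofReal (w x ^ p) ≤ ∫⁻ x, ENNReal.ofReal (essSupSnd f x ^ p) :=
    lintegral_mono fun x => by gcongr; exacts [hw0 x, hwG x]
  filter_upwards [ae_forall_weakNorm_indicator_le hp₀' h₀ (hGw p₀ hp₀')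
      (E := fun s : ℚ => {x | s < w x}) fun _ => measurableSet_lt measurable_const hw,
    ae_forall_weakNorm_indicator_le hp₁' h₁ (hGw p₁ hp₁')
      (E := fun s : ℚ => {x | w x ≤ s}) fun _ => measurableSet_le hw measurable_const]
    with y hy₀ hy₁
  refine eLpNorm_le_ofReal_rpow_mul_of_lintegral_le (essSupSnd_nonneg f) hp hK.le
    ((lintegral_enorm_rpow_le_of_weakNorm_split hw hw0 hp₀' hp₀p hpp₁ hA₀.le hA₁.le
      (ne_top_of_le_ne_top hI hwp)
      (fun s x => norm_le_norm_indicator_lt_add_norm_indicator_le hsub f w s x y) hy₀ hy₁).trans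
      (by gcongr))

/-- Mixed-norm Marcinkiewicz interpolation: a sublinear operator satisfying
mixed weak-type `(p₀, p₀)` and `(p₁, p₁)` estimates (sup in `y`, weak `L^{p}` in `x`)
satisfies the strong mixed estimate for each intermediate exponent `p₀ < p < p₁`,
with constant `(p((2A₀)^{p₀}/(p-p₀) + (2A₁)^{p₁}/(p₁-p)))^{1/p}`. -/
theorem mixed_norm_interpolation
    (T : (ℝ → ℝ → ℂ) → (ℝ → ℝ → ℂ))
    (hsub : ∀ f g : ℝ → ℝ → ℂ, ∀ x y : ℝ,
      ‖T (f + g) x y‖ ≤ ‖T f x y‖ + ‖T g x y‖)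
    (p₀ p₁ : ℝ) (hp₀ : 1 ≤ p₀) (hp₀₁ : p₀ < p₁)
    (A₀ A₁ : ℝ) (hA₀ : 0 < A₀) (hA₁ : 0 < A₁)
    (h₀ : ∀ f : ℝ → ℝ → ℂ,
      essSup (fun y : ℝ => weakNorm (fun x => T f x y) p₀) volume ≤
        ENNReal.ofReal A₀ *
          eLpNorm (fun x : ℝ =>
            (essSup (fun y : ℝ => (‖f x y‖₊ : ℝ≥0∞)) volume).toReal)
            (ENNReal.ofReal p₀) volume)
    (h₁ : ∀ f : ℝ → ℝ → ℂ,
      essSup (fun y : ℝ => weakNorm (fun x => T f x y) p₁) volume ≤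
        ENNReal.ofReal A₁ *
          eLpNorm (fun x : ℝ =>
            (essSup (fun y : ℝ => (‖f x y‖₊ : ℝ≥0∞)) volume).toReal)
            (ENNReal.ofReal p₁) volume) :
    ∀ p : ℝ, p₀ < p → p < p₁ → ∀ f : ℝ → ℝ → ℂ,
      essSup (fun y : ℝ => eLpNorm (fun x => T f x y) (ENNReal.ofReal p) volume) volume ≤
        ENNReal.ofReal
            ((p * ((2 * A₀) ^ p₀ / (p - p₀) + (2 * A₁) ^ p₁ / (p₁ - p))) ^ (1 / p)) *
          eLpNorm (fun x : ℝ =>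
            (essSup (fun y : ℝ => (‖f x y‖₊ : ℝ≥0∞)) volume).toReal)
            (ENNReal.ofReal p) volume :=
  mixed_norm_interpolation_general T hsub p₀ p₁ hp₀ A₀ A₁ hA₀ hA₁ h₀ h₁
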